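/- Let x = (x₀,…,x₅) and y = (y₀,…,y₅) be vectors in ℂ⁶ with x ≠ 0 and (y₃, y₄, y₅) ≠ (0,0,0). Assume there is no λ ∈ ℂ, λ ≠ 0, with xᵢ² = λ²yᵢ² for i = 0,1,2 and xⱼ = λyⱼ for j = 3,4,5. Then there exists a homogeneous polynomial f ∈ ℂ[X₀,…,X₅] of degree 3, each of whose monomials has even degree in each of the variables X₀, X₁ and X₂ separately, such that f(x₀,…,x₅) = 0 and f(y₀,…,y₅) ≠ 0. -/

import Mathlib

open MvPolynomial

private lemma deg_single6 (j : Fin 6) (n : ℕ) : (Finsupp.single j n).degree = n := by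
  simp [Finsupp.degree_eq_weight_one, Finsupp.weight_apply, Finsupp.sum_single_index]

private lemma deg_add6 (d e : Fin 6 →₀ ℕ) : (d + e).degree = d.degree + e.degree := by
  simp [Finsupp.degree_eq_weight_one, map_add]

private lemma eval_mono1 (x : Fin 6 → ℂ) (c : ℂ) (j : Fin 6) :
    eval x (monomial (Finsupp.single j 3) c) = c * x j ^ 3 := by
  simp [eval_monomial, Finsupp.prod_single_index]

private lemma eval_mono2 (x : Fin 6 → ℂ) (c : ℂ) (j m : Fin 6) :
    eval x (monomial (Finsupp.single j 1 + Finsupp.single m 2) c) = c * (x j * x m ^ 2) := by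
  rw [eval_monomial,
    Finsupp.prod_add_index' (fun a => pow_zero (x a)) (fun a b c => pow_add (x a) b c)]
  simp [Finsupp.prod_single_index]

private lemma eval_mono3 (x : Fin 6 → ℂ) (c : ℂ) (i k : Fin 6) :
    eval x (monomial (Finsupp.single i 2 + Finsupp.single k 1) c) = c * (x i ^ 2 * x k) := by
  rw [eval_monomial,
    Finsupp.prod_add_index' (fun a => pow_zero (x a)) (fun a b c => pow_add (x a) b c)]
  simp [Finsupp.prod_single_index]

private lemma aux_hom_supp (d e : Fin 6 →₀ ℕ) (c1 c2 : ℂ)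
    (hd : d.degree = 3) (he : e.degree = 3)
    (hde : ∀ i : Fin 6, (i : ℕ) < 3 → Even (d i) ∧ Even (e i)) :
    (monomial d c1 + monomial e c2).IsHomogeneous 3 ∧
    ∀ m ∈ (monomial d c1 + monomial e c2).support, Even (m 0) ∧ Even (m 1) ∧ Even (m 2) := by
  constructor
  · exact (isHomogeneous_monomial c1 hd).add (isHomogeneous_monomial c2 he)
  · intro m hm
    have hmem := MvPolynomial.support_add hm
    have : m = d ∨ m = e := by
      rcases Finset.mem_union.1 hmem with h | h
      · exact Or.inl (Finset.mem_singleton.1 (support_monomial_subset h))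
      · exact Or.inr (Finset.mem_singleton.1 (support_monomial_subset h))
    rcases this with rfl | rfl
    · exact ⟨(hde 0 (by norm_num)).1, (hde 1 (by norm_num)).1, (hde 2 (by norm_num)).1⟩
    · exact ⟨(hde 0 (by norm_num)).2, (hde 1 (by norm_num)).2, (hde 2 (by norm_num)).2⟩

private lemma ne_of_ge3 {j i : Fin 6} (hj : 3 ≤ (j : ℕ)) (hi : (i : ℕ) < 3) : j ≠ i := by
  intro h; subst h; omega

theorem stmt_5 (x y : Fin 6 → ℂ) (hx : x ≠ 0)
    (hy : ¬(y 3 = 0 ∧ y 4 = 0 ∧ y 5 = 0))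
    (h : ¬∃ l : ℂ, l ≠ 0 ∧
        (∀ i : Fin 6, (i : ℕ) < 3 → x i ^ 2 = l ^ 2 * y i ^ 2) ∧
        (∀ j : Fin 6, 3 ≤ (j : ℕ) → x j = l * y j)) :
    ∃ f : MvPolynomial (Fin 6) ℂ, f.IsHomogeneous 3 ∧
      (∀ m ∈ f.support, Even (m 0) ∧ Even (m 1) ∧ Even (m 2)) ∧
      eval x f = 0 ∧ eval y f ≠ 0 := by
  classical
  obtain ⟨m, hm3, hym⟩ : ∃ m : Fin 6, 3 ≤ (m : ℕ) ∧ y m ≠ 0 := by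
    by_contra hc
    push_neg at hc
    exact hy ⟨hc 3 (by decide), hc 4 (by decide), hc 5 (by decide)⟩
  by_cases hu : x 3 = 0 ∧ x 4 = 0 ∧ x 5 = 0
  · -- Case A : x₃ = x₄ = x₅ = 0
    have hxm : x m = 0 := by
      have h6 := m.isLt
      have : m = 3 ∨ m = 4 ∨ m = 5 := by
        rcases m with ⟨v, hv⟩
        simp only [Fin.ext_iff] at *
        omega
      rcases this with rfl | rfl | rfl
      · exact hu.1
      · exact hu.2.1
      · exact hu.2.2
    refine ⟨monomial (Finsupp.single m 3) 1 + monomial (Finsupp.single m 3) 0, ?_, ?_, ?_, ?_⟩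
    · exact (aux_hom_supp _ _ 1 0 (deg_single6 m 3) (deg_single6 m 3)
        (fun i hi => by simp [Finsupp.single_apply_eq_zero, ne_of_ge3 hm3 hi])).1
    · exact (aux_hom_supp _ _ 1 0 (deg_single6 m 3) (deg_single6 m 3)
        (fun i hi => by simp [Finsupp.single_apply_eq_zero, ne_of_ge3 hm3 hi])).2
    · simp [eval_mono1, hxm]
    · rw [map_add, eval_mono1, eval_mono1]
      simpa using pow_ne_zero 3 hym
  · -- Case B : some x_j ≠ 0, j ∈ {3,4,5}
    obtain ⟨k, hk3, hxk⟩ : ∃ k : Fin 6, 3 ≤ (k : ℕ) ∧ x k ≠ 0 := by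
      by_contra hc
      push_neg at hc
      exact hu ⟨hc 3 (by decide), hc 4 (by decide), hc 5 (by decide)⟩
    by_cases hp : ∀ j k : Fin 6, 3 ≤ (j : ℕ) → 3 ≤ (k : ℕ) → x j * y k = x k * y j
    · -- Case B2 : (x₃,x₄,x₅) proportional to (y₃,y₄,y₅)
      set l : ℂ := x m / y m with hl
      have hlin : ∀ j : Fin 6, 3 ≤ (j : ℕ) → x j = l * y j := by
        intro j hj
        have := hp j m hj hm3
        rw [hl, div_mul_eq_mul_div, eq_div_iff hym]
        linear_combination this
      have hl0 : l ≠ 0 := by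
        intro h0
        apply hxk
        rw [hlin k hk3, h0, zero_mul]
      obtain ⟨i, hi3, hi2⟩ : ∃ i : Fin 6, (i : ℕ) < 3 ∧ x i ^ 2 ≠ l ^ 2 * y i ^ 2 := by
        by_contra hc
        push_neg at hc
        exact h ⟨l, hl0, fun i hi => hc i hi, hlin⟩
      have hyk : y k ≠ 0 := by
        intro h0
        apply hxk
        rw [hlin k hk3, h0, mul_zero]
      have hxkl : x k = l * y k := hlin k hk3
      refine ⟨monomial (Finsupp.single i 2 + Finsupp.single k 1) (x k ^ 2)
          + monomial (Finsupp.single k 3) (-(x i ^ 2)), ?_, ?_, ?_, ?_⟩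
      · refine (aux_hom_supp _ _ _ _ ?_ (deg_single6 k 3) ?_).1
        · rw [deg_add6, deg_single6, deg_single6]
        · intro c hc
          constructor
          · rcases eq_or_ne i c with rfl | hic
            · norm_num [Finsupp.single_apply, ne_of_ge3 hk3 hc]
            · simp [Finsupp.single_apply, ne_of_ge3 hk3 hc, hic]
          · simp [Finsupp.single_apply_eq_zero, ne_of_ge3 hk3 hc]
      · refine (aux_hom_supp _ _ _ _ ?_ (deg_single6 k 3) ?_).2
        · rw [deg_add6, deg_single6, deg_single6]
        · intro c hc
          constructor
          · rcases eq_or_ne i c with rfl | hic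
            · norm_num [Finsupp.single_apply, ne_of_ge3 hk3 hc]
            · simp [Finsupp.single_apply, ne_of_ge3 hk3 hc, hic]
          · simp [Finsupp.single_apply_eq_zero, ne_of_ge3 hk3 hc]
      · rw [map_add, eval_mono3, eval_mono1]; ring
      · rw [map_add, eval_mono3, eval_mono1]
        have key : x k ^ 2 * (y i ^ 2 * y k) + -(x i ^ 2) * y k ^ 3
            = y k ^ 3 * (l ^ 2 * y i ^ 2 - x i ^ 2) := by
          rw [hxkl]; ring
        rw [key]
        exact mul_ne_zero (pow_ne_zero 3 hyk) (sub_ne_zero.2 fun h0 => hi2 h0.symm)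
    · -- Case B1 : not proportional
      push_neg at hp
      obtain ⟨j, k', hj3, hk'3, hne⟩ := hp
      refine ⟨monomial (Finsupp.single j 1 + Finsupp.single m 2) (x k')
          + monomial (Finsupp.single k' 1 + Finsupp.single m 2) (-(x j)), ?_, ?_, ?_, ?_⟩
      · refine (aux_hom_supp _ _ _ _ ?_ ?_ ?_).1
        · rw [deg_add6, deg_single6, deg_single6]
        · rw [deg_add6, deg_single6, deg_single6]
        · intro c hc
          constructor <;>
            simp [Finsupp.single_apply_eq_zero, ne_of_ge3 hj3 hc, ne_of_ge3 hk'3 hc,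
              ne_of_ge3 hm3 hc]
      · refine (aux_hom_supp _ _ _ _ ?_ ?_ ?_).2
        · rw [deg_add6, deg_single6, deg_single6]
        · rw [deg_add6, deg_single6, deg_single6]
        · intro c hc
          constructor <;>
            simp [Finsupp.single_apply_eq_zero, ne_of_ge3 hj3 hc, ne_of_ge3 hk'3 hc,
              ne_of_ge3 hm3 hc]
      · rw [map_add, eval_mono2, eval_mono2]; ring
      · rw [map_add, eval_mono2, eval_mono2]
        have key : x k' * (y j * y m ^ 2) + -(x j) * (y k' * y m ^ 2)
            = (x k' * y j - x j * y k') * y m ^ 2 := by ring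
        rw [key]
        exact mul_ne_zero (sub_ne_zero.2 fun h0 => hne h0.symm) (pow_ne_zero 2 hym)
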